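/- arXiv:1104.1513 — 7 statements merged into one kernel-verified Lean document; each statement's English description precedes it below -/
import Mathlib

section
/- Let N ≥ 2, p_c = 2N/(N+1), M > 0, and define ρ(u) = u^{(N+1)/N}(log M − log u)^{(N+1)/(2N)} for 0 < u < M. Then with k = 1/(N+1), for every u ∈ (0, M): k·(ρ'(u))² − ρ(u)·ρ''(u) = u^{2/N}·[ ((N+1)/(2N))·(log M − log u)^{1/N} + ((N+1)/(4N))·(log M − log u)^{-(N-1)/N} ]. -/
/-!
For `ρ = u ^ a * L ^ b` with `L = log M - log u`, differentiating twice shows that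
`k ρ'² - ρ ρ''` is `u ^ (2a - 2)` times a combination of `L ^ (2b)`, `L ^ (2b - 1)` and
`L ^ (2b - 2)` whose coefficients are polynomials in `a`, `b`, `k`. For `a = (N + 1) / N` and
`k = 1 / (N + 1)` the coefficient of `L ^ (2b)` vanishes, and `b = (N + 1) / (2N)` gives the
remaining two.
-/

open Real Set

noncomputable section

def logWeight (M a b y : ℝ) : ℝ := y ^ a * (log M - log y) ^ b

theorem hasDerivAt_logWeight {M x : ℝ} (a b : ℝ) (hx : 0 < x) (hxM : x < M) :
    HasDerivAt (logWeight M a b)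
      (a * logWeight M (a - 1) b x - b * logWeight M (a - 1) (b - 1) x) x := by
  have hL : 0 < log M - log x := sub_pos.2 (log_lt_log hx hxM)
  have hpow : HasDerivAt (fun y : ℝ => y ^ a) (a * x ^ (a - 1)) x :=
    hasDerivAt_rpow_const (Or.inl hx.ne')
  have hlog : HasDerivAt (fun y : ℝ => (log M - log y) ^ b)
      (-x⁻¹ * b * (log M - log x) ^ (b - 1)) x :=
    ((hasDerivAt_log hx.ne').const_sub _).rpow_const (Or.inl hL.ne')
  refine (hpow.mul hlog).congr_deriv ?_
  rw [logWeight, logWeight, rpow_sub_one hx.ne']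
  ring

theorem eqOn_deriv_of_eqOn_logWeight {ρ : ℝ → ℝ} {M a b : ℝ}
    (hρ : EqOn ρ (logWeight M a b) (Ioo 0 M)) :
    EqOn (deriv ρ)
      (fun x => a * logWeight M (a - 1) b x - b * logWeight M (a - 1) (b - 1) x) (Ioo 0 M) := by
  intro x hx
  rw [(hρ.eventuallyEq_of_mem (isOpen_Ioo.mem_nhds hx)).deriv_eq,
    (hasDerivAt_logWeight a b hx.1 hx.2).deriv]

theorem deriv_deriv_of_eqOn_logWeight {ρ : ℝ → ℝ} {M a b u : ℝ}
    (hρ : EqOn ρ (logWeight M a b) (Ioo 0 M)) (hu : u ∈ Ioo 0 M) :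
    deriv (deriv ρ) u =
      a * ((a - 1) * logWeight M (a - 1 - 1) b u - b * logWeight M (a - 1 - 1) (b - 1) u)
        - b * ((a - 1) * logWeight M (a - 1 - 1) (b - 1) u
          - (b - 1) * logWeight M (a - 1 - 1) (b - 1 - 1) u) := by
  have hderiv := (eqOn_deriv_of_eqOn_logWeight hρ).eventuallyEq_of_mem (isOpen_Ioo.mem_nhds hu)
  rw [hderiv.deriv_eq]
  exact (((hasDerivAt_logWeight (a - 1) b hu.1 hu.2).const_mul a).sub
    ((hasDerivAt_logWeight (a - 1) (b - 1) hu.1 hu.2).const_mul b)).deriv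

theorem mul_deriv_sq_sub_mul_deriv_deriv_of_eqOn_logWeight {ρ : ℝ → ℝ} {M a b u : ℝ} (k : ℝ)
    (hρ : EqOn ρ (logWeight M a b) (Ioo 0 M)) (hu : u ∈ Ioo 0 M) :
    k * deriv ρ u ^ 2 - ρ u * deriv (deriv ρ) u =
      u ^ (2 * a - 2) * ((k * a ^ 2 - a * (a - 1)) * (log M - log u) ^ (2 * b)
        + b * (2 * a - 1 - 2 * k * a) * (log M - log u) ^ (2 * b - 1)
        + b * (k * b - b + 1) * (log M - log u) ^ (2 * b - 2)) := by
  obtain ⟨hu0, huM⟩ := hu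
  have hL : 0 < log M - log u := sub_pos.2 (log_lt_log hu0 huM)
  rw [eqOn_deriv_of_eqOn_logWeight hρ ⟨hu0, huM⟩, deriv_deriv_of_eqOn_logWeight hρ ⟨hu0, huM⟩,
    hρ ⟨hu0, huM⟩]
  simp only [logWeight]
  set L := log M - log u
  have hu2 : u ^ (2 * a - 2) = u ^ (a - 1) * u ^ (a - 1) := by
    rw [← rpow_add hu0]; ring_nf
  have hua : u ^ a = u ^ (a - 1) * u := by
    rw [rpow_sub_one hu0.ne']; field_simp
  have hua2 : u ^ (a - 1 - 1) = u ^ (a - 1) / u := rpow_sub_one hu0.ne' _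
  have hLb : L ^ b = L ^ (b - 1) * L := by
    rw [rpow_sub_one hL.ne']; field_simp
  have hLb2 : L ^ (b - 1 - 1) = L ^ (b - 1) / L := rpow_sub_one hL.ne' _
  have hL2 : L ^ (2 * b - 2) = L ^ (b - 1) * L ^ (b - 1) := by
    rw [← rpow_add hL]; ring_nf
  have hL1 : L ^ (2 * b - 1) = L ^ (b - 1) * L ^ (b - 1) * L := by
    rw [← hL2, ← rpow_add_one hL.ne']; ring_nf
  have hL0 : L ^ (2 * b) = L ^ (b - 1) * L ^ (b - 1) * L * L := by
    rw [← hL1, ← rpow_add_one hL.ne']; ring_nf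
  rw [hu2, hua, hua2, hLb, hLb2, hL2, hL1, hL0]
  field_simp
  ring

end

theorem stmt_4_general (N : ℕ) (hN : 2 ≤ N) (M : ℝ)
    (k : ℝ) (hk : k = 1 / (N + 1))
    (ρ : ℝ → ℝ)
    (hρ : ∀ u : ℝ, 0 < u → u < M →
      ρ u = u ^ ((N + 1 : ℝ) / N) * (Real.log M - Real.log u) ^ ((N + 1 : ℝ) / (2 * N))) :
    ∀ u : ℝ, 0 < u → u < M →
      k * (deriv ρ u) ^ 2 - ρ u * deriv (deriv ρ) u
        = u ^ ((2 : ℝ) / N) *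
            (((N + 1 : ℝ) / (2 * N)) * (Real.log M - Real.log u) ^ ((1 : ℝ) / N)
              + ((N + 1 : ℝ) / (4 * N)) * (Real.log M - Real.log u) ^ (-((N - 1 : ℝ) / N))) := by
  intro u hu huM
  have hN0 : (N : ℝ) ≠ 0 := by exact_mod_cast (by omega : N ≠ 0)
  have hu_exp : 2 * ((N + 1 : ℝ) / N) - 2 = 2 / N := by field_simp; ring
  have hL_exp₁ : 2 * ((N + 1 : ℝ) / (2 * N)) - 1 = 1 / N := by field_simp; ring
  have hL_exp₂ : 2 * ((N + 1 : ℝ) / (2 * N)) - 2 = -((N - 1 : ℝ) / N) := by field_simp; ring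
  have hc₂ : k * ((N + 1 : ℝ) / N) ^ 2 - (N + 1) / N * ((N + 1) / N - 1) = 0 := by
    rw [hk]; field_simp; ring
  have hc₁ : (N + 1 : ℝ) / (2 * N) * (2 * ((N + 1) / N) - 1 - 2 * k * ((N + 1) / N))
      = (N + 1) / (2 * N) := by
    rw [hk]; field_simp; ring
  have hc₀ : (N + 1 : ℝ) / (2 * N) * (k * ((N + 1) / (2 * N)) - (N + 1) / (2 * N) + 1)
      = (N + 1) / (4 * N) := by
    rw [hk]; field_simp; ring
  rw [mul_deriv_sq_sub_mul_deriv_deriv_of_eqOn_logWeight k (fun x hx => hρ x hx.1 hx.2) ⟨hu, huM⟩,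
    hu_exp, hL_exp₁, hL_exp₂, hc₂, hc₁, hc₀, zero_mul, zero_add]

theorem stmt_4 (N : ℕ) (hN : 2 ≤ N) (M : ℝ) (hM : 0 < M)
    (k : ℝ) (hk : k = 1 / (N + 1))
    (ρ : ℝ → ℝ)
    (hρ : ∀ u : ℝ, 0 < u → u < M →
      ρ u = u ^ ((N + 1 : ℝ) / N) * (Real.log M - Real.log u) ^ ((N + 1 : ℝ) / (2 * N))) :
    ∀ u : ℝ, 0 < u → u < M →
      k * (deriv ρ u) ^ 2 - ρ u * deriv (deriv ρ) u
        = u ^ ((2 : ℝ) / N) *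
            (((N + 1 : ℝ) / (2 * N)) * (Real.log M - Real.log u) ^ ((1 : ℝ) / N)
              + ((N + 1 : ℝ) / (4 * N)) * (Real.log M - Real.log u) ^ (-((N - 1 : ℝ) / N))) :=
  stmt_4_general N hN M k hk ρ hρ
end

section
/- Let N ≥ 2 and M > 0, let p_c = 2N/(N+1) and q = N/(N+1), and define ρ(u) = u^{(N+1)/N}(log M − log u)^{(N+1)/N} for 0 < u < M. Then for every u ∈ (0,M) one has R₁ := ρ^{p_c-2}((1/(N+1))(ρ')² − ρρ'') = ((N+1)/N)(log M − log u) and R₂ := ρ^{q-1}ρ' = ((N+1)/N)(log M − log u − 1). -/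
open Real Filter

-- derivative of L
lemma Lderiv (M x : ℝ) (hx : 0 < x) :
    HasDerivAt (fun y => Real.log M - Real.log y) (-(1/x)) x := by
  simpa using ((Real.hasDerivAt_log hx.ne').const_sub (Real.log M))

lemma first_deriv (M : ℝ) (α : ℝ) (x : ℝ) (hx : 0 < x) (hxM : x < M)
    (hL : 0 < Real.log M - Real.log x) :
    HasDerivAt (fun y => y ^ α * (Real.log M - Real.log y) ^ α)
      (α * x ^ (α-1) * (Real.log M - Real.log x) ^ (α-1) *
        ((Real.log M - Real.log x) - 1)) x := by
  set L := Real.log M - Real.log x with hLdef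
  have h1 : HasDerivAt (fun y : ℝ => y ^ α) (α * x ^ (α-1)) x :=
    Real.hasDerivAt_rpow_const (Or.inl hx.ne')
  have h2 : HasDerivAt (fun y => (Real.log M - Real.log y) ^ α)
      (-(1/x) * α * L ^ (α-1)) x :=
    (Lderiv M x hx).rpow_const (Or.inl hL.ne')
  have h := h1.mul h2
  have e1 : x ^ α = x * x ^ (α-1) := by
    have h := Real.rpow_add hx (α-1) 1
    rw [Real.rpow_one] at h
    rw [show α = α - 1 + 1 by ring, h]; ring
  have e2 : L ^ α = L * L ^ (α-1) := by
    have h := Real.rpow_add hL (α-1) 1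
    rw [Real.rpow_one] at h
    rw [show α = α - 1 + 1 by ring, h]; ring
  refine h.congr_deriv ?_
  symm
  rw [e1, e2]
  field_simp
  ring

lemma second_deriv (M : ℝ) (α : ℝ) (x : ℝ) (hx : 0 < x) (hxM : x < M)
    (hL : 0 < Real.log M - Real.log x) :
    HasDerivAt (fun y => α * y ^ (α-1) * (Real.log M - Real.log y) ^ (α-1) *
        ((Real.log M - Real.log y) - 1))
      (α * x ^ (α-2) * (Real.log M - Real.log x) ^ (α-2) *
        ((α-1) * ((Real.log M - Real.log x) - 1)^2 - (Real.log M - Real.log x))) x := by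
  set L := Real.log M - Real.log x with hLdef
  have h1 : HasDerivAt (fun y : ℝ => α * y ^ (α-1)) (α * ((α-1) * x ^ (α-1-1))) x :=
    (Real.hasDerivAt_rpow_const (p := α - 1) (Or.inl hx.ne')).const_mul α
  have h2 : HasDerivAt (fun y => (Real.log M - Real.log y) ^ (α-1))
      (-(1/x) * (α-1) * L ^ (α-1-1)) x :=
    (Lderiv M x hx).rpow_const (Or.inl hL.ne')
  have h3 : HasDerivAt (fun y => (Real.log M - Real.log y) - 1) (-(1/x)) x :=
    (Lderiv M x hx).sub_const 1
  have h := (h1.mul h2).mul h3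
  have e1 : x ^ (α-1) = x * x ^ (α-2) := by
    have h := Real.rpow_add hx (α-2) 1
    rw [Real.rpow_one] at h
    rw [show α - 1 = α - 2 + 1 by ring, h]; ring
  have e2 : L ^ (α-1) = L * L ^ (α-2) := by
    have h := Real.rpow_add hL (α-2) 1
    rw [Real.rpow_one] at h
    rw [show α - 1 = α - 2 + 1 by ring, h]; ring
  refine h.congr_deriv ?_
  symm
  simp only [Pi.mul_apply, ← hLdef]
  rw [show α - 1 - 1 = α - 2 by ring, e1, e2]
  field_simp
  ring

theorem stmt_5 (N : ℕ) (hN : 2 ≤ N) (M : ℝ) (hM : 0 < M)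
    (p_c q : ℝ) (hpc : p_c = 2 * N / (N + 1)) (hq : q = N / (N + 1 : ℝ))
    (ρ : ℝ → ℝ)
    (hρ : ∀ u : ℝ, 0 < u → u < M →
      ρ u = u ^ ((N + 1 : ℝ) / N) * (Real.log M - Real.log u) ^ ((N + 1 : ℝ) / N)) :
    ∀ u : ℝ, 0 < u → u < M →
      ρ u ^ (p_c - 2) *
          ((1 / (N + 1 : ℝ)) * (deriv ρ u) ^ 2 - ρ u * deriv (deriv ρ) u)
        = ((N + 1 : ℝ) / N) * (Real.log M - Real.log u) ∧
      ρ u ^ (q - 1) * deriv ρ u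
        = ((N + 1 : ℝ) / N) * (Real.log M - Real.log u - 1) := by
  intro u hu huM
  have hN0 : (0:ℝ) < N := by positivity
  have hN1 : (0:ℝ) < (N:ℝ) + 1 := by positivity
  set α : ℝ := ((N:ℝ) + 1) / N with hα
  set L : ℝ := Real.log M - Real.log u with hLdef
  have hL : 0 < L := sub_pos.2 (Real.log_lt_log hu huM)
  have hmem : Set.Ioo (0:ℝ) M ∈ nhds u := (isOpen_Ioo).mem_nhds ⟨hu, huM⟩
  -- ρ agrees with the explicit formula near u
  have hev : ρ =ᶠ[nhds u] (fun y => y ^ α * (Real.log M - Real.log y) ^ α) := by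
    filter_upwards [hmem] with x hx
    exact hρ x hx.1 hx.2
  -- deriv ρ on Ioo
  have hd1 : ∀ x ∈ Set.Ioo (0:ℝ) M, deriv ρ x =
      α * x ^ (α-1) * (Real.log M - Real.log x) ^ (α-1) *
        ((Real.log M - Real.log x) - 1) := by
    intro x hx
    have hLx : 0 < Real.log M - Real.log x := sub_pos.2 (Real.log_lt_log hx.1 hx.2)
    have hevx : ρ =ᶠ[nhds x] (fun y => y ^ α * (Real.log M - Real.log y) ^ α) := by
      filter_upwards [(isOpen_Ioo).mem_nhds hx] with z hz
      exact hρ z hz.1 hz.2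
    rw [hevx.deriv_eq, (first_deriv M α x hx.1 hx.2 hLx).deriv]
  have hderu : deriv ρ u = α * u ^ (α-1) * L ^ (α-1) * (L - 1) := hd1 u ⟨hu, huM⟩
  have hev2 : deriv ρ =ᶠ[nhds u] (fun y => α * y ^ (α-1) * (Real.log M - Real.log y) ^ (α-1) *
        ((Real.log M - Real.log y) - 1)) := by
    filter_upwards [hmem] with x hx
    exact hd1 x hx
  have hder2u : deriv (deriv ρ) u =
      α * u ^ (α-2) * L ^ (α-2) * ((α-1) * (L - 1)^2 - L) := by
    rw [hev2.deriv_eq, (second_deriv M α u hu huM hL).deriv]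
  have hρu : ρ u = u ^ α * L ^ α := hρ u hu huM
  -- abbreviations
  set A : ℝ := u ^ (α-1) with hA
  set B : ℝ := L ^ (α-1) with hB
  have hApos : 0 < A := Real.rpow_pos_of_pos hu _
  have hBpos : 0 < B := Real.rpow_pos_of_pos hL _
  clear_value A B
  have e1 : u ^ α = u * A := by
    have h := Real.rpow_add hu (α-1) 1
    rw [Real.rpow_one] at h
    rw [hA, show α = α - 1 + 1 by ring, h]; ring
  have e2 : L ^ α = L * B := by
    have h := Real.rpow_add hL (α-1) 1
    rw [Real.rpow_one] at h
    rw [hB, show α = α - 1 + 1 by ring, h]; ring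
  have e3 : u ^ (α-2) = A / u := by
    have h := Real.rpow_add hu (α-2) 1
    rw [Real.rpow_one] at h
    rw [hA, eq_div_iff hu.ne', show α - 1 = α - 2 + 1 by ring, h]
  have e4 : L ^ (α-2) = B / L := by
    have h := Real.rpow_add hL (α-2) 1
    rw [Real.rpow_one] at h
    rw [hB, eq_div_iff hL.ne', show α - 1 = α - 2 + 1 by ring, h]
  -- powers of ρ
  have key : ∀ c : ℝ, (u ^ α * L ^ α) ^ c = u ^ (α * c) * L ^ (α * c) := by
    intro c
    rw [Real.mul_rpow (Real.rpow_nonneg hu.le _) (Real.rpow_nonneg hL.le _),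
      ← Real.rpow_mul hu.le, ← Real.rpow_mul hL.le]
  have hpc2 : α * (p_c - 2) = (α - 1) * (-2) := by
    rw [hpc, hα]; field_simp; ring
  have hq1 : α * (q - 1) = (α - 1) * (-1) := by
    rw [hq, hα]; field_simp; ring
  have eρpc : (u ^ α * L ^ α) ^ (p_c - 2) = 1 / (A^2 * B^2) := by
    rw [key, hpc2, Real.rpow_mul hu.le, Real.rpow_mul hL.le, ← hA, ← hB,
      show (-2:ℝ) = ((-2:ℤ):ℝ) by norm_num, Real.rpow_intCast, Real.rpow_intCast,
      zpow_neg, zpow_neg, ← one_div, ← one_div, div_mul_div_comm, one_mul]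
    norm_cast
  have eρq : (u ^ α * L ^ α) ^ (q - 1) = 1 / (A * B) := by
    rw [key, hq1, Real.rpow_mul hu.le, Real.rpow_mul hL.le, ← hA, ← hB,
      show (-1:ℝ) = ((-1:ℤ):ℝ) by norm_num, Real.rpow_intCast, Real.rpow_intCast,
      zpow_neg, zpow_neg, ← one_div, ← one_div, div_mul_div_comm, one_mul]
    norm_num
  rw [hρu, hderu, hder2u, eρpc, eρq, e1, e2, e3, e4]
  constructor
  · rw [hα]; field_simp; ring
  · rw [hα]; field_simp
end

section
/- Let p ∈ (1,2), q ∈ (0,p), and c > 0. The function W(t) = (2c)^{2/(p-q)} + (p(p-1)t/2)^{-2/p}, t > 0, satisfies W'(t) + 2(p-1)·W(t)^{(q+2)/2}·(W(t)^{(p-q)/2} − c) ≥ 0 for all t > 0. -/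
/-!
Write `W = A + u` with `A = (2c)^{2/(p-q)}` and `u t = (K/t)^{2/p}`, `K = 2/(p(p-1))`.
Then `W' = u' = -(2/p) u / t`. Since `A^{(p-q)/2} = 2c`, we have `W^{(p-q)/2} - c ≥ W^{(p-q)/2}/2`,
so the nonlinear term is at least `(p-1) W^{(p+2)/2} ≥ (p-1) u^{(p+2)/2} = (p-1) (K/t) u = (2/p) u / t`,
which exactly compensates `W'`.
-/

theorem hasDerivAt_div_rpow {K a t : ℝ} (hK : K ≠ 0) (ht : 0 < t) :
    HasDerivAt (fun s => (K / s) ^ a) (-(a / t) * (K / t) ^ a) t := by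
  have hinv : HasDerivAt (fun s => K / s) (-(K / t) / t) t := by
    simpa only [div_eq_mul_inv] using ((hasDerivAt_inv ht.ne').const_mul K).congr_deriv
      (by field_simp : K * -(t ^ 2)⁻¹ = -(K / t) / t)
  convert hinv.rpow_const (p := a) (Or.inl (div_ne_zero hK ht.ne')) using 1
  rw [Real.rpow_sub_one (div_ne_zero hK ht.ne')]
  field_simp

theorem rpow_rpow_eq_mul_rpow {x a b : ℝ} (hx : 0 < x) (hab : a * b = 1 + a) :
    (x ^ a) ^ b = x * x ^ a := by
  rw [← Real.rpow_mul hx.le, hab, Real.rpow_add hx, Real.rpow_one]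

theorem half_rpow_add_le_rpow_mul_sub {x y r s c : ℝ} (hy : 0 < y) (hyx : y ≤ x)
    (hrs : 0 ≤ s + r) (h : 2 * c ≤ x ^ r) :
    y ^ (s + r) / 2 ≤ x ^ s * (x ^ r - c) := by
  have hx : 0 < x := hy.trans_le hyx
  have hmono : y ^ (s + r) ≤ x ^ s * x ^ r := by
    rw [← Real.rpow_add hx]
    exact Real.rpow_le_rpow hy.le hyx hrs
  nlinarith [Real.rpow_pos_of_pos hx s]

theorem stmt_7_general (p q c : ℝ) (hp1 : 1 < p) (hqp : q < p)
    (hc : 0 < c)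
    (W : ℝ → ℝ)
    (hW : ∀ t : ℝ, 0 < t →
      W t = (2 * c) ^ (2 / (p - q)) + (2 / (p * (p - 1) * t)) ^ (2 / p)) :
    ∀ t : ℝ, 0 < t →
      0 ≤ deriv W t + 2 * (p - 1) * W t ^ ((q + 2) / 2) * (W t ^ ((p - q) / 2) - c) := by
  intro t ht
  have hp : 0 < p := by linarith
  set K := 2 / (p * (p - 1)) with hK_def
  have hK : 0 < K := div_pos two_pos (mul_pos hp (sub_pos.2 hp1))
  have hKp : (p - 1) * K = 2 / p := by rw [hK_def]; field_simp [(sub_pos.2 hp1).ne']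
  set u := (K / t) ^ (2 / p)
  have hu : 0 < u := by positivity
  have hWu : ∀ s, 0 < s → W s = (2 * c) ^ (2 / (p - q)) + (K / s) ^ (2 / p) := fun s hs => by
    rw [hW s hs, div_div]
  have hWt : W t = (2 * c) ^ (2 / (p - q)) + u := hWu t ht
  have hA : 0 < (2 * c) ^ (2 / (p - q)) := by positivity
  have hderiv : deriv W t = -(2 / p / t) * u := by
    rw [(Filter.eventuallyEq_of_mem (Ioi_mem_nhds ht) hWu).deriv_eq]
    exact ((hasDerivAt_div_rpow hK.ne' ht).const_add _).deriv
  have h2c : 2 * c ≤ W t ^ ((p - q) / 2) := by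
    refine (Real.rpow_inv_le_iff_of_pos (by positivity) (by linarith) (by linarith)).1 ?_
    rw [inv_div]; linarith
  have hnonlin : 2 / p / t * u ≤
      2 * (p - 1) * (W t ^ ((q + 2) / 2) * (W t ^ ((p - q) / 2) - c)) := by
    have hsplit := half_rpow_add_le_rpow_mul_sub (s := (q + 2) / 2) hu (by linarith)
      (by linarith) h2c
    have hpow : u ^ ((q + 2) / 2 + (p - q) / 2) = K / t * u :=
      rpow_rpow_eq_mul_rpow (by positivity) (by field_simp; ring)
    rw [hpow] at hsplit
    calc 2 / p / t * u = 2 * (p - 1) * (K / t * u / 2) := by rw [← hKp]; ring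
      _ ≤ _ := by gcongr
  rw [hderiv, mul_assoc]
  linarith

theorem stmt_7 (p q c : ℝ) (hp1 : 1 < p) (hp2 : p < 2) (hq0 : 0 < q) (hqp : q < p)
    (hc : 0 < c)
    (W : ℝ → ℝ)
    (hW : ∀ t : ℝ, 0 < t →
      W t = (2 * c) ^ (2 / (p - q)) + (2 / (p * (p - 1) * t)) ^ (2 / p)) :
    ∀ t : ℝ, 0 < t →
      0 ≤ deriv W t + 2 * (p - 1) * W t ^ ((q + 2) / 2) * (W t ^ ((p - q) / 2) - c) :=
  stmt_7_general p q c hp1 hqp hc W hW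
end

section
/- Let q ≥ 1 and 0 < ε ≤ g be real numbers. Then q·ε²·g^{q-2} ≤ ε^q + (q-1)·g^q. -/
theorem stmt_8 (q ε g : ℝ) (hq : 1 ≤ q) (hε : 0 < ε) (hεg : ε ≤ g) :
    q * ε ^ 2 * g ^ (q - 2) ≤ ε ^ q + (q - 1) * g ^ q := by
  have hg : 0 < g := hε.trans_le hεg
  set x := ε / g with hxdef
  have hx : 0 < x := div_pos hε hg
  have hx1 : x ≤ 1 := (div_le_one hg).mpr hεg
  have hb : 1 + q * (x - 1) ≤ x ^ q := by
    have h := one_add_mul_self_le_rpow_one_add (by linarith : (-1:ℝ) ≤ x - 1) hq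
    have h1 : (1 + (x - 1)) = x := by ring
    rwa [h1] at h
  have hx2 : x ^ 2 ≤ x := by nlinarith
  have key : q * x ^ 2 ≤ x ^ q + (q - 1) := by nlinarith
  have hgq : (0:ℝ) < g ^ q := Real.rpow_pos_of_pos hg q
  have hmul := mul_le_mul_of_nonneg_right key hgq.le
  have hL : q * x ^ 2 * g ^ q = q * ε ^ 2 * g ^ (q - 2) := by
    have h2 : g ^ (2:ℝ) = g ^ (2:ℕ) := by
      rw [← Real.rpow_natCast g 2]; norm_num
    rw [Real.rpow_sub hg, h2, hxdef, div_pow]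
    field_simp
  have hR : (x ^ q + (q - 1)) * g ^ q = ε ^ q + (q - 1) * g ^ q := by
    rw [hxdef, Real.div_rpow hε.le hg.le]
    field_simp
  rw [hL, hR] at hmul
  exact hmul
end

section
/- Let N ≥ 1 and u ∈ L¹(ℝ^N) ∩ W^{1,∞}(ℝ^N). Then there is a constant C depending only on N such that ‖u‖_∞ ≤ C·‖∇u‖_∞^{N/(N+1)}·‖u‖_1^{1/(N+1)}. -/
open MeasureTheory Metric Module
open scoped NNReal

/-! If `a = |u x| > 0`, the Lipschitz bound keeps `|u| ≥ a / 2` on the ball of radius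
`a / (2L)` around `x`, so `‖u‖₁ ≥ (a / 2) · ω · (a / (2L)) ^ N` with `ω` the volume of the unit
ball; that is, `a ^ (N + 1) ≤ 2 ^ (N + 1) L ^ N ‖u‖₁ / ω`. Taking `(N + 1)`-th roots gives the
inequality. -/

theorem LipschitzWith.half_abs_le_abs {X : Type*} [PseudoMetricSpace X] {u : X → ℝ} {L : ℝ≥0}
    (hu : LipschitzWith L u) {x y : X} (hxy : L * dist y x ≤ |u x| / 2) : |u x| / 2 ≤ |u y| := by
  have h := hu.dist_le_mul x y
  rw [Real.dist_eq, dist_comm] at h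
  linarith [abs_sub_abs_le_abs_sub (u x) (u y)]

section Interpolation

variable {E : Type*} [NormedAddCommGroup E] [NormedSpace ℝ E] [FiniteDimensional ℝ E]
  [MeasurableSpace E] [BorelSpace E] {μ : Measure E} [μ.IsAddHaarMeasure]
  {u : E → ℝ} {L : ℝ≥0}

theorem LipschitzWith.abs_pow_mul_measureReal_ball_le_of_pos (hu : LipschitzWith L u)
    (hL : 0 < L) (hi : Integrable u μ) (x : E) :
    |u x| ^ (finrank ℝ E + 1) * μ.real (ball 0 1) ≤
      2 ^ (finrank ℝ E + 1) * (L : ℝ) ^ finrank ℝ E * ∫ y, |u y| ∂μ := by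
  have hI : 0 ≤ ∫ y, |u y| ∂μ := integral_nonneg fun y ↦ abs_nonneg _
  rcases (abs_nonneg (u x)).eq_or_lt with ha | ha
  · rw [← ha, zero_pow (finrank ℝ E).succ_ne_zero, zero_mul]
    positivity
  set a := |u x|
  set d := finrank ℝ E
  have hL' : (0 : ℝ) < L := hL
  set r := a / (2 * L) with hr_def
  have hr : 0 < r := by positivity
  have hball : a / 2 * μ.real (ball x r) ≤ ∫ y, |u y| ∂μ := by
    refine (setIntegral_ge_of_const_le_real measurableSet_ball measure_ball_lt_top.ne
      (fun y hy ↦ hu.half_abs_le_abs ?_) hi.abs.integrableOn).trans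
      (setIntegral_le_integral hi.abs (.of_forall fun y ↦ abs_nonneg _))
    rw [mem_ball] at hy
    calc (L : ℝ) * dist y x ≤ L * r := by gcongr
      _ = a / 2 := by rw [hr_def]; field_simp
  have hvol : μ.real (ball x r) = r ^ d * μ.real (ball 0 1) := by
    rw [measureReal_def, measureReal_def, μ.addHaar_ball_of_pos x hr, ENNReal.toReal_mul,
      ENNReal.toReal_ofReal (by positivity)]
  calc a ^ (d + 1) * μ.real (ball 0 1)
      = 2 ^ (d + 1) * (L : ℝ) ^ d * (a / 2 * μ.real (ball x r)) := by
        rw [hvol, hr_def, div_pow, mul_pow]; field_simp; ring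
    _ ≤ 2 ^ (d + 1) * (L : ℝ) ^ d * ∫ y, |u y| ∂μ := by gcongr

/-- The case `L = 0` follows from the positive case for every `L' > L` by letting `L' ↓ L`. -/
theorem LipschitzWith.abs_pow_mul_measureReal_ball_le (hu : LipschitzWith L u)
    (hi : Integrable u μ) (x : E) :
    |u x| ^ (finrank ℝ E + 1) * μ.real (ball 0 1) ≤
      2 ^ (finrank ℝ E + 1) * (L : ℝ) ^ finrank ℝ E * ∫ y, |u y| ∂μ := by
  have hcont : Continuous fun L' : ℝ≥0 ↦
      2 ^ (finrank ℝ E + 1) * (L' : ℝ) ^ finrank ℝ E * ∫ y, |u y| ∂μ := by fun_prop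
  refine ge_of_tendsto (hcont.continuousWithinAt (s := Set.Ioi L) (x := L)).tendsto ?_
  filter_upwards [self_mem_nhdsWithin] with L' hL'
  exact (hu.weaken hL'.le).abs_pow_mul_measureReal_ball_le_of_pos
    (pos_of_gt hL') hi x

end Interpolation

theorem stmt_13_general (N : ℕ) :
    ∃ C : ℝ, 0 < C ∧
      ∀ (u : EuclideanSpace ℝ (Fin N) → ℝ) (L : NNReal),
        LipschitzWith L u → Integrable u →
        ∀ x : EuclideanSpace ℝ (Fin N),
          |u x| ≤ C * (L : ℝ) ^ ((N : ℝ) / (N + 1)) *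
            (∫ y, |u y|) ^ ((1 : ℝ) / (N + 1)) := by
  set V := volume.real (ball (0 : EuclideanSpace ℝ (Fin N)) 1)
  have hV : 0 < V :=
    ENNReal.toReal_pos (measure_ball_pos volume 0 one_pos).ne' measure_ball_lt_top.ne
  refine ⟨(2 ^ (N + 1) / V) ^ ((1 : ℝ) / (N + 1)), by positivity, fun u L hu hi x ↦ ?_⟩
  have hI : 0 ≤ ∫ y, |u y| := integral_nonneg fun y ↦ abs_nonneg _
  have hpow : |u x| ^ (N + 1) ≤ 2 ^ (N + 1) / V * (L : ℝ) ^ N * ∫ y, |u y| := by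
    have := hu.abs_pow_mul_measureReal_ball_le hi x
    rw [finrank_euclideanSpace_fin] at this
    rw [div_mul_eq_mul_div, div_mul_eq_mul_div, le_div_iff₀ hV]
    linarith
  calc |u x| = (|u x| ^ (N + 1)) ^ ((1 : ℝ) / (N + 1)) := by
        rw [one_div, ← Nat.cast_succ, Real.pow_rpow_inv_natCast (abs_nonneg _) N.succ_ne_zero]
    _ ≤ (2 ^ (N + 1) / V * (L : ℝ) ^ N * ∫ y, |u y|) ^ ((1 : ℝ) / (N + 1)) := by gcongr
    _ = _ := by
      rw [Real.mul_rpow (by positivity) hI, Real.mul_rpow (by positivity) (by positivity),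
        ← Real.rpow_natCast (L : ℝ) N, ← Real.rpow_mul L.coe_nonneg, mul_one_div]

theorem stmt_13 (N : ℕ) (hN : 1 ≤ N) :
    ∃ C : ℝ, 0 < C ∧
      ∀ (u : EuclideanSpace ℝ (Fin N) → ℝ) (L : NNReal),
        LipschitzWith L u → Integrable u →
        ∀ x : EuclideanSpace ℝ (Fin N),
          |u x| ≤ C * (L : ℝ) ^ ((N : ℝ) / (N + 1)) *
            (∫ y, |u y|) ^ ((1 : ℝ) / (N + 1)) :=
  stmt_13_general N
end

section
/- Let p ∈ (1,2), q ∈ (p-1, p), N ≥ 1 with N(p-1) − q(N-1) > 0. Define Σ(x) = |x|^{-(p-q)/(q-p+1)} on ℝ^N \ {0}, and A₀ = ((q-p+1)/(p-q))·((N(p-1)−q(N-1))/(q-p+1))^{1/(q-p+1)}. Then for every A ≥ A₀, the function A·Σ is a classical stationary supersolution of ∂_t u = Δ_p u − |∇u|^q on ℝ^N \ {0}; that is, Δ_p(AΣ)(x) − |∇(AΣ)(x)|^q ≤ 0 for all x ≠ 0, where Δ_p v = div(|∇v|^{p-2}∇v). -/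
/-!
The profile `r ^ α` with `α = -(p - q)/(q - p + 1)` is self-similar: for `v = A r ^ α` both
`Δ_p v` and `|∇v| ^ q` are multiples of the same power `r ^ ((α - 1) q)`. Writing
`B = -A α = |v'| r ^ (1 - α)` and `D = (N(p-1) - q(N-1))/(q-p+1)`, the supersolution inequality
becomes `D B ^ (p - 1) ≤ B ^ q`, i.e. `D ≤ B ^ (q - p + 1)`, which is exactly `A ≥ A₀`.
-/

open Real

section RpowProfile

variable {f : ℝ → ℝ} {A α r : ℝ}

lemma deriv_eq_of_eqOn_Ioi_rpow (hf : ∀ x, 0 < x → f x = A * x ^ α) (hr : 0 < r) :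
    deriv f r = A * α * r ^ (α - 1) := by
  have hf_nhds : f =ᶠ[nhds r] fun x => A * x ^ α := by
    filter_upwards [Ioi_mem_nhds hr] with x hx using hf x hx
  rw [hf_nhds.deriv_eq, ((hasDerivAt_rpow_const (Or.inl hr.ne')).const_mul A).deriv]
  ring

lemma deriv_deriv_eq_of_eqOn_Ioi_rpow (hf : ∀ x, 0 < x → f x = A * x ^ α) (hr : 0 < r) :
    deriv (deriv f) r = A * α * (α - 1) * r ^ (α - 2) := by
  rw [deriv_eq_of_eqOn_Ioi_rpow (fun x hx => deriv_eq_of_eqOn_Ioi_rpow hf hx) hr]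
  ring_nf

lemma abs_deriv_eq_of_eqOn_Ioi_rpow (hf : ∀ x, 0 < x → f x = A * x ^ α) (hAα : A * α < 0)
    (hr : 0 < r) : |deriv f r| = -(A * α) * r ^ (α - 1) := by
  rw [deriv_eq_of_eqOn_Ioi_rpow hf hr,
    abs_of_neg (mul_neg_of_neg_of_pos hAα (rpow_pos_of_pos hr _))]
  ring

lemma abs_deriv_rpow_eq_of_eqOn_Ioi_rpow (hf : ∀ x, 0 < x → f x = A * x ^ α)
    (hAα : A * α < 0) (hr : 0 < r) (q : ℝ) :
    |deriv f r| ^ q = (-(A * α)) ^ q * r ^ ((α - 1) * q) := by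
  rw [abs_deriv_eq_of_eqOn_Ioi_rpow hf hAα hr, mul_rpow (by linarith) (rpow_pos_of_pos hr _).le,
    ← rpow_mul hr.le]

lemma radial_pLaplacian_eq_of_eqOn_Ioi_rpow (hf : ∀ x, 0 < x → f x = A * x ^ α)
    (hAα : A * α < 0) (hr : 0 < r) (N p : ℝ) :
    |deriv f r| ^ (p - 2) * ((p - 1) * deriv (deriv f) r + (N - 1) * deriv f r / r)
      = ((p - 1) * (1 - α) - (N - 1)) * (-(A * α)) ^ (p - 1) * r ^ ((α - 1) * (p - 1) - 1) := by
  have hB : 0 < -(A * α) := neg_pos.mpr hAα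
  have hB_pow : (-(A * α)) ^ (p - 1) = (-(A * α)) ^ (p - 2) * -(A * α) := by
    rw [show p - 1 = (p - 2) + 1 by ring, rpow_add hB, rpow_one]
  have hr_pow : r ^ ((α - 1) * (p - 1) - 1) = r ^ ((α - 1) * (p - 2)) * r ^ (α - 2) := by
    rw [← rpow_add hr]; ring_nf
  have hr_div : r ^ (α - 1) / r = r ^ (α - 2) := by
    rw [← rpow_sub_one hr.ne']; ring_nf
  rw [abs_deriv_rpow_eq_of_eqOn_Ioi_rpow hf hAα hr, deriv_deriv_eq_of_eqOn_Ioi_rpow hf hr,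
    deriv_eq_of_eqOn_Ioi_rpow hf hr, hB_pow, hr_pow, mul_div_assoc, mul_div_assoc, hr_div]
  ring

end RpowProfile

theorem stmt_16_general (N : ℕ) (p q : ℝ)
    (hq1 : p - 1 < q) (hq2 : q < p)
    (hNpq : 0 < (N : ℝ) * (p - 1) - q * (N - 1))
    (A₀ : ℝ)
    (hA₀ : A₀ = ((q - p + 1) / (p - q)) *
      (((N : ℝ) * (p - 1) - q * (N - 1)) / (q - p + 1)) ^ (1 / (q - p + 1))) :
    ∀ A : ℝ, A₀ ≤ A →
      ∀ f : ℝ → ℝ, (∀ r : ℝ, 0 < r → f r = A * r ^ (-(p - q) / (q - p + 1))) →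
      ∀ r : ℝ, 0 < r →
        |deriv f r| ^ (p - 2) *
            ((p - 1) * deriv (deriv f) r + ((N : ℝ) - 1) * deriv f r / r)
          - |deriv f r| ^ q ≤ 0 := by
  intro A hA f hf r hr
  set s := q - p + 1
  set D := ((N : ℝ) * (p - 1) - q * (N - 1)) / s
  set α := -(p - q) / s
  have hs : 0 < s := by linarith
  have hpq : 0 < p - q := by linarith
  have hD : 0 < D := div_pos hNpq hs
  have hA₀_pos : 0 < A₀ := hA₀ ▸ mul_pos (div_pos hs hpq) (rpow_pos_of_pos hD _)
  have hB_eq : -(A * α) = A * ((p - q) / s) := by ring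
  have hB : 0 < -(A * α) := hB_eq ▸ mul_pos (hA₀_pos.trans_le hA) (div_pos hpq hs)
  have hDB : D ≤ (-(A * α)) ^ s := by
    rw [← rpow_inv_le_iff_of_pos hD.le hB.le hs, ← one_div, hB_eq]
    calc D ^ (1 / s) = A₀ * ((p - q) / s) := by rw [hA₀]; field_simp
      _ ≤ A * ((p - q) / s) := by gcongr
  have hcoeff : (p - 1) * (1 - α) - (N - 1) = D := by
    simp only [α, D]; field_simp; simp only [s]; ring
  have hexp : (α - 1) * (p - 1) - 1 = (α - 1) * q := by
    simp only [α]; field_simp; simp only [s]; ring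
  have hAα : A * α < 0 := neg_pos.mp hB
  rw [radial_pLaplacian_eq_of_eqOn_Ioi_rpow hf hAα hr,
    abs_deriv_rpow_eq_of_eqOn_Ioi_rpow hf hAα hr, hcoeff, hexp, ← sub_mul]
  refine mul_nonpos_of_nonpos_of_nonneg (sub_nonpos.mpr ?_) (rpow_nonneg hr.le _)
  calc D * (-(A * α)) ^ (p - 1) ≤ (-(A * α)) ^ s * (-(A * α)) ^ (p - 1) := by gcongr
    _ = (-(A * α)) ^ q := by rw [← rpow_add hB]; congr 1; simp only [s]; ring

theorem stmt_16 (N : ℕ) (hN : 1 ≤ N) (p q : ℝ) (hp1 : 1 < p) (hp2 : p < 2)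
    (hq1 : p - 1 < q) (hq2 : q < p)
    (hNpq : 0 < (N : ℝ) * (p - 1) - q * (N - 1))
    (A₀ : ℝ)
    (hA₀ : A₀ = ((q - p + 1) / (p - q)) *
      (((N : ℝ) * (p - 1) - q * (N - 1)) / (q - p + 1)) ^ (1 / (q - p + 1))) :
    ∀ A : ℝ, A₀ ≤ A →
      ∀ f : ℝ → ℝ, (∀ r : ℝ, 0 < r → f r = A * r ^ (-(p - q) / (q - p + 1))) →
      ∀ r : ℝ, 0 < r →
        |deriv f r| ^ (p - 2) *
            ((p - 1) * deriv (deriv f) r + ((N : ℝ) - 1) * deriv f r / r)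
          - |deriv f r| ^ q ≤ 0 :=
  stmt_16_general N p q hq1 hq2 hNpq A₀ hA₀
end

section
/- Let θ > 1, α < 1, C > 0, and let τ : (0,∞) → [0,∞) be a nonincreasing differentiable function satisfying τ'(s) + C·s^{-α}·τ(s)^{1/θ} ≤ 0 for all s > 0. Then there exists S > 0 such that τ(s) = 0 for all s ≥ S. -/
/-!
If `τ` vanishes somewhere, it vanishes from then on, being nonincreasing and nonnegative.
Otherwise `τ > 0`, and with `p = 1 - 1/θ > 0` the Lyapunov function
`τ(t)^p + p C/(1-α) · t^(1-α)` has derivative `p τ^(-1/θ) (τ' + C t^(-α) τ^(1/θ)) ≤ 0`,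
so it is nonincreasing; yet it is at least `p C/(1-α) · t^(1-α) → ∞`, a contradiction.
-/

open Filter Set

theorem AntitoneOn.not_tendsto_atTop {α β : Type*} [LinearOrder α] [NoMaxOrder α]
    [Preorder β] [NoMaxOrder β] {f : α → β} {a : α} (hf : AntitoneOn f (Ioi a)) :
    ¬ Tendsto f atTop atTop := fun htop => by
  have : Nonempty α := ⟨a⟩
  obtain ⟨b, hab⟩ := exists_gt a
  obtain ⟨x, hfx, hbx⟩ := ((htop.eventually_gt_atTop (f b)).and (eventually_ge_atTop b)).exists
  exact (hfx.trans_le (hf hab (hab.trans_le hbx) hbx)).false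

section Lyapunov

variable {τ : ℝ → ℝ} {q α C : ℝ}

theorem hasDerivAt_rpow_add_mul_rpow {s : ℝ} (hα : α ≠ 1) (hs : 0 < s) (hτs : 0 < τ s)
    (hdiff : DifferentiableAt ℝ τ s) :
    HasDerivAt (fun t => τ t ^ (1 - q) + (1 - q) * C / (1 - α) * t ^ (1 - α))
      ((1 - q) * τ s ^ (-q) * (deriv τ s + C * s ^ (-α) * τ s ^ q)) s := by
  have hτ := hdiff.hasDerivAt.rpow_const (p := 1 - q) (Or.inl hτs.ne')
  have hpow := (Real.hasDerivAt_rpow_const (p := 1 - α) (Or.inl hs.ne')).const_mul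
    ((1 - q) * C / (1 - α))
  refine (hτ.add hpow).congr_deriv ?_
  have hcancel : τ s ^ (-q) * τ s ^ q = 1 := by
    rw [← Real.rpow_add hτs, neg_add_cancel, Real.rpow_zero]
  have hα' : 1 - α ≠ 0 := sub_ne_zero.mpr hα.symm
  rw [show 1 - q - 1 = -q by ring, show 1 - α - 1 = -α by ring]
  field_simp
  linear_combination -(1 - q) * C * s ^ (-α) * hcancel

theorem antitoneOn_rpow_add_mul_rpow (hq : q ≤ 1) (hα : α ≠ 1)
    (hpos : ∀ s, 0 < s → 0 < τ s) (hdiff : ∀ s, 0 < s → DifferentiableAt ℝ τ s)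
    (hineq : ∀ s, 0 < s → deriv τ s + C * s ^ (-α) * τ s ^ q ≤ 0) :
    AntitoneOn (fun t => τ t ^ (1 - q) + (1 - q) * C / (1 - α) * t ^ (1 - α)) (Ioi 0) := by
  have hderiv (s : ℝ) (hs : s ∈ Ioi 0) := hasDerivAt_rpow_add_mul_rpow (q := q) (C := C) hα hs
    (hpos s hs) (hdiff s hs)
  refine antitoneOn_of_hasDerivWithinAt_nonpos (convex_Ioi 0)
    (f' := fun s => (1 - q) * τ s ^ (-q) * (deriv τ s + C * s ^ (-α) * τ s ^ q))
    (fun s hs => (hderiv s hs).continuousAt.continuousWithinAt) ?_ ?_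
  · rw [interior_Ioi]
    exact fun s hs => (hderiv s hs).hasDerivWithinAt
  · rw [interior_Ioi]
    intro s hs
    have hfactor : 0 ≤ (1 - q) * τ s ^ (-q) :=
      mul_nonneg (sub_nonneg.mpr hq) (Real.rpow_nonneg (hpos s hs).le _)
    exact mul_nonpos_of_nonneg_of_nonpos hfactor (hineq s hs)

end Lyapunov

theorem tendsto_rpow_add_mul_rpow_atTop {τ : ℝ → ℝ} {p α K : ℝ} (hα : α < 1) (hK : 0 < K)
    (hnonneg : ∀ s, 0 < s → 0 ≤ τ s) :
    Tendsto (fun t => τ t ^ p + K * t ^ (1 - α)) atTop atTop := by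
  refine tendsto_atTop_mono' atTop ?_
    ((tendsto_rpow_atTop (sub_pos.mpr hα)).const_mul_atTop hK)
  filter_upwards [eventually_gt_atTop 0] with t ht
  exact le_add_of_nonneg_left (Real.rpow_nonneg (hnonneg t ht) p)

theorem stmt_17 (θ α C : ℝ) (hθ : 1 < θ) (hα : α < 1) (hC : 0 < C)
    (τ : ℝ → ℝ)
    (hnonneg : ∀ s : ℝ, 0 < s → 0 ≤ τ s)
    (hdiff : ∀ s : ℝ, 0 < s → DifferentiableAt ℝ τ s)
    (hmono : AntitoneOn τ (Set.Ioi 0))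
    (hineq : ∀ s : ℝ, 0 < s → deriv τ s + C * s ^ (-α) * τ s ^ (1 / θ) ≤ 0) :
    ∃ S : ℝ, 0 < S ∧ ∀ s : ℝ, S ≤ s → τ s = 0 := by
  by_cases hzero : ∃ S, 0 < S ∧ τ S = 0
  · obtain ⟨S, hS, hτS⟩ := hzero
    refine ⟨S, hS, fun s hs => le_antisymm ?_ (hnonneg s (hS.trans_le hs))⟩
    exact hτS ▸ hmono hS (hS.trans_le hs) hs
  · push Not at hzero
    have hpos (s : ℝ) (hs : 0 < s) : 0 < τ s := (hnonneg s hs).lt_of_ne (hzero s hs).symm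
    have hq : 1 / θ < 1 := (div_lt_one (by linarith)).mpr hθ
    have hK : 0 < (1 - 1 / θ) * C / (1 - α) :=
      div_pos (mul_pos (sub_pos.mpr hq) hC) (sub_pos.mpr hα)
    exact absurd (tendsto_rpow_add_mul_rpow_atTop hα hK hnonneg)
      (antitoneOn_rpow_add_mul_rpow hq.le hα.ne hpos hdiff hineq).not_tendsto_atTop
end
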